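/- Let j be a nucleus over an inductively generated entailment relation ▷, and let ▷_* be ▷ plus a collection of additional axioms all of which are valid in ▷^j (an intermediate j-extension). Then (▷_*)^j = ▷^j. -/

import Mathlib

/-- A single-conclusion entailment relation on `S`. -/
structure IsEntailment {S : Type*} [DecidableEq S] (E : Finset S → S → Prop) : Prop where
  refl : ∀ (U : Finset S) (a : S), a ∈ U → E U a
  mono : ∀ (U U' : Finset S) (a : S), E U a → E (U ∪ U') a
  cut : ∀ (V V' : Finset S) (a b : S), E V b → E (insert b V') a → E (V ∪ V') a

/-- A nucleus over an entailment relation. -/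
structure IsNucleus {S : Type*} [DecidableEq S] (E : Finset S → S → Prop) (j : S → S) : Prop where
  lj : ∀ (U : Finset S) (a b : S), E (insert a U) (j b) → E (insert (j a) U) (j b)
  rj : ∀ (U : Finset S) (b : S), E U b → E U (j b)

/-- A rule (instance): a set of premisses together with a conclusion. -/
abbrev EntRule (S : Type*) := Set (Finset S × S) × (Finset S × S)

/-- A relation satisfies a rule if the conclusion holds whenever all premisses do. -/
def RuleSat {S : Type*} (E : Finset S → S → Prop) (r : EntRule S) : Prop :=
  (∀ p ∈ r.1, E p.1 p.2) → E r.2.1 r.2.2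

/-- The entailment relation inductively generated by a set of axioms and rules. -/
def Derives {S : Type*} [DecidableEq S] (Rules : Set (EntRule S))
    (U : Finset S) (a : S) : Prop :=
  ∀ E : Finset S → S → Prop, IsEntailment E → (∀ r ∈ Rules, RuleSat E r) → E U a

/-- The stability axioms `ja ▷ a`, viewed as rules without premisses. -/
def StabRules {S : Type*} (j : S → S) : Set (EntRule S) :=
  {r | ∃ a : S, r = (∅, ({j a}, a))}

/-!
Adding to `▷^j` rules that `▷^j` already satisfies cannot enlarge it: `▷^j` is itself an
entailment relation closed under all rules of `▷_*` plus stability, so it contains the least such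
relation `(▷_*)^j`; the converse inclusion holds because `(▷_*)^j` is generated by more rules.
-/

namespace Derives

variable {S : Type*} [DecidableEq S]

theorem isEntailment (R : Set (EntRule S)) : IsEntailment (Derives R) where
  refl U a h _ hE _ := hE.refl U a h
  mono U U' a h E hE hR := hE.mono U U' a (h E hE hR)
  cut V V' a b h₁ h₂ E hE hR := hE.cut V V' a b (h₁ E hE hR) (h₂ E hE hR)

theorem ruleSat {R : Set (EntRule S)} {r : EntRule S} (hr : r ∈ R) : RuleSat (Derives R) r :=
  fun hp E hE hR => hR r hr fun p hpp => hp p hpp E hE hR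

theorem mono_rules {R R' : Set (EntRule S)} (hRR' : R ⊆ R') {U : Finset S} {a : S}
    (h : Derives R U a) : Derives R' U a :=
  fun E hE hR' => h E hE fun r hr => hR' r (hRR' hr)

theorem of_forall_ruleSat {R R' : Set (EntRule S)} (hR' : ∀ r ∈ R', RuleSat (Derives R) r)
    {U : Finset S} {a : S} (h : Derives R' U a) : Derives R U a :=
  h _ (isEntailment R) hR'

end Derives

theorem RuleSat.of_conclusion {S : Type*} {E : Finset S → S → Prop} {r : EntRule S}
    (h : E r.2.1 r.2.2) : RuleSat E r :=
  fun _ => h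

theorem intermediate_strongExtension_eq_general {S : Type*} [DecidableEq S]
    (Rules Ax : Set (EntRule S)) (j : S → S)
    (hAx : ∀ r ∈ Ax, r.1 = ∅ ∧ Derives (Rules ∪ StabRules j) r.2.1 r.2.2) :
    ∀ (U : Finset S) (a : S),
      Derives (Rules ∪ Ax ∪ StabRules j) U a ↔ Derives (Rules ∪ StabRules j) U a := by
  intro U a
  constructor
  · refine Derives.of_forall_ruleSat ?_
    rintro r ((hr | hr) | hr)
    · exact Derives.ruleSat (Or.inl hr)
    · exact RuleSat.of_conclusion (hAx r hr).2
    · exact Derives.ruleSat (Or.inr hr)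
  · exact Derives.mono_rules (Set.union_subset_union_left _ Set.subset_union_left)

/-- for an intermediate `j`-extension `▷_*` of `▷`, obtained by
adding axioms valid in `▷^j`, one has `(▷_*)^j = ▷^j`. -/
theorem intermediate_strongExtension_eq {S : Type*} [DecidableEq S]
    (Rules Ax : Set (EntRule S)) (j : S → S)
    (hj : IsNucleus (Derives Rules) j)
    (hAx : ∀ r ∈ Ax, r.1 = ∅ ∧ Derives (Rules ∪ StabRules j) r.2.1 r.2.2) :
    ∀ (U : Finset S) (a : S),
      Derives (Rules ∪ Ax ∪ StabRules j) U a ↔ Derives (Rules ∪ StabRules j) U a :=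
  intermediate_strongExtension_eq_general Rules Ax j hAx
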